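/- Let N ≥ 2, 1 ≤ M < N, and D ≥ 1 be integers. For every τ ∈ (0,1), P_D'(τ) = 0 if and only if H_1(τ) = H_2(τ). -/

import Mathlib

open Finset Set

noncomputable def f1 (N M : ℕ) (τ : ℝ) : ℝ :=
  ∑ i ∈ range M, ((N-1).choose i : ℝ) * τ^i * (1-τ)^(N-1-i)

noncomputable def f2 (N M : ℕ) (τ : ℝ) : ℝ :=
  ∑ i ∈ range M, (i : ℝ) * ((N-1).choose i : ℝ) * τ^i * (1-τ)^(N-1-i)

noncomputable def H1 (N M : ℕ) (τ : ℝ) : ℝ := f2 N M τ / f1 N M τ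

noncomputable def H2 (N D : ℕ) (τ : ℝ) : ℝ :=
  τ * ((N:ℝ) + (D:ℝ) - 1 - (D:ℝ) / (1 - (1-τ)^D))

noncomputable def P (N M D : ℕ) (τ : ℝ) : ℝ := (1 - (1 - τ)^D) * f1 N M τ

/-!
Write `g τ = 1 - (1 - τ)^D`, so that `P = g · f1`. The Bernstein-type identity
`τ (1 - τ) f1' = f2 - (N - 1) τ f1` and `(1 - τ) g' = D (1 - τ)^D = D (1 - g)` turn
`τ (1 - τ) P'` into `D τ (1 - g) f1 + g (f2 - (N - 1) τ f1)`. On `(0, 1)` both `f1` and `g`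
are positive, and dividing this expression by `f1 g` gives exactly `H1 - H2`.
-/

lemma hasDerivAt_pow_mul_one_sub_pow (i k : ℕ) (τ : ℝ) :
    HasDerivAt (fun t : ℝ => t ^ i * (1 - t) ^ k)
      (i * τ ^ (i - 1) * (1 - τ) ^ k - τ ^ i * (k * (1 - τ) ^ (k - 1))) τ := by
  have h : HasDerivAt (fun t : ℝ => (1 - t) ^ k) (k * (1 - τ) ^ (k - 1) * -1) τ :=
    ((hasDerivAt_id' τ).const_sub 1).pow k
  exact ((hasDerivAt_pow i τ).fun_mul h).congr_deriv (by ring)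

lemma mul_one_sub_mul_deriv_pow_mul_one_sub_pow (i k : ℕ) (τ : ℝ) :
    τ * (1 - τ) * (i * τ ^ (i - 1) * (1 - τ) ^ k - τ ^ i * (k * (1 - τ) ^ (k - 1)))
      = (i - (i + k) * τ) * (τ ^ i * (1 - τ) ^ k) := by
  rcases i with _ | i <;> rcases k with _ | k <;>
    simp only [Nat.cast_zero, Nat.cast_succ, zero_tsub, Nat.add_sub_cancel, pow_succ] <;> ring

lemma differentiable_f1 (N M : ℕ) : Differentiable ℝ (f1 N M) := by
  unfold f1
  fun_prop

lemma mul_one_sub_mul_deriv_f1 {N M : ℕ} (hMN : M ≤ N) (τ : ℝ) :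
    τ * (1 - τ) * deriv (f1 N M) τ = f2 N M τ - ((N : ℝ) - 1) * τ * f1 N M τ := by
  have hderiv : HasDerivAt (f1 N M) (∑ i ∈ range M, ((N - 1).choose i : ℝ) *
      (i * τ ^ (i - 1) * (1 - τ) ^ (N - 1 - i)
        - τ ^ i * ((N - 1 - i : ℕ) * (1 - τ) ^ (N - 1 - i - 1)))) τ := by
    unfold f1
    exact HasDerivAt.fun_sum fun i _ => by
      simpa only [mul_assoc] using (hasDerivAt_pow_mul_one_sub_pow i (N - 1 - i) τ).const_mul
        ((N - 1).choose i : ℝ)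
  rw [hderiv.deriv, f1, f2, mul_sum, mul_sum, ← sum_sub_distrib]
  refine sum_congr rfl fun i hi => ?_
  have hiN : (i : ℝ) + (N - 1 - i : ℕ) = (N : ℝ) - 1 := by
    rw [Finset.mem_range] at hi
    rw [← Nat.cast_add, Nat.add_sub_cancel' (by omega), Nat.cast_pred (by omega)]
  rw [mul_left_comm, mul_one_sub_mul_deriv_pow_mul_one_sub_pow, hiN]
  ring

lemma hasDerivAt_one_sub_one_sub_pow (D : ℕ) (τ : ℝ) :
    HasDerivAt (fun t : ℝ => 1 - (1 - t) ^ D) (D * (1 - τ) ^ (D - 1)) τ :=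
  (((hasDerivAt_id' τ).const_sub 1).pow D).const_sub 1 |>.congr_deriv (by ring)

lemma one_sub_mul_natCast_mul_pow_pred (D : ℕ) (x : ℝ) :
    (1 - x) * (D * (1 - x) ^ (D - 1)) = D * (1 - x) ^ D := by
  cases D <;> simp only [Nat.cast_zero, Nat.add_sub_cancel, pow_succ] <;> ring

lemma mul_one_sub_mul_deriv_P {N M : ℕ} (D : ℕ) (hMN : M ≤ N) (τ : ℝ) :
    τ * (1 - τ) * deriv (P N M D) τ
      = D * τ * (1 - τ) ^ D * f1 N M τ
        + (1 - (1 - τ) ^ D) * (f2 N M τ - ((N : ℝ) - 1) * τ * f1 N M τ) := by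
  have hP : HasDerivAt (P N M D)
      (D * (1 - τ) ^ (D - 1) * f1 N M τ + (1 - (1 - τ) ^ D) * deriv (f1 N M) τ) τ :=
    (hasDerivAt_one_sub_one_sub_pow D τ).mul (differentiable_f1 N M τ).hasDerivAt
  rw [hP.deriv, ← mul_one_sub_mul_deriv_f1 hMN]
  linear_combination τ * f1 N M τ * one_sub_mul_natCast_mul_pow_pred D τ

lemma f1_pos {N M : ℕ} (hM : 1 ≤ M) (hMN : M ≤ N) {τ : ℝ} (hτ : τ ∈ Ioo (0 : ℝ) 1) :
    0 < f1 N M τ := by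
  obtain ⟨hτ0, hτ1⟩ := hτ
  refine sum_pos (fun i hi => ?_) (nonempty_range_iff.mpr (by omega))
  have : 0 < ((N - 1).choose i : ℝ) := by
    rw [Finset.mem_range] at hi
    exact_mod_cast Nat.choose_pos (by omega)
  have : 0 < 1 - τ := sub_pos.mpr hτ1
  positivity

lemma one_sub_one_sub_pow_pos {D : ℕ} (hD : 1 ≤ D) {τ : ℝ} (hτ : τ ∈ Ioo (0 : ℝ) 1) :
    0 < 1 - (1 - τ) ^ D := by
  obtain ⟨hτ0, hτ1⟩ := hτ
  exact sub_pos.mpr (pow_lt_one₀ (by linarith) (by linarith) (by omega))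

lemma H1_eq_H2_iff {N M D : ℕ} {τ : ℝ} (hf1 : f1 N M τ ≠ 0) (hg : 1 - (1 - τ) ^ D ≠ 0) :
    H1 N M τ = H2 N D τ ↔ D * τ * (1 - τ) ^ D * f1 N M τ
      + (1 - (1 - τ) ^ D) * (f2 N M τ - ((N : ℝ) - 1) * τ * f1 N M τ) = 0 := by
  rw [H1, H2, div_eq_iff hf1]
  field_simp
  constructor <;> intro h <;> linear_combination h

theorem stmt3_general (N M D : ℕ) (hM : 1 ≤ M) (hMN : M < N) (hD : 1 ≤ D) :
    ∀ τ ∈ Ioo (0:ℝ) 1, deriv (P N M D) τ = 0 ↔ H1 N M τ = H2 N D τ := by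
  intro τ hτ
  have hτ' : τ * (1 - τ) ≠ 0 := mul_ne_zero hτ.1.ne' (sub_ne_zero.mpr hτ.2.ne')
  rw [H1_eq_H2_iff (f1_pos hM hMN.le hτ).ne' (one_sub_one_sub_pow_pos hD hτ).ne',
    ← mul_one_sub_mul_deriv_P D hMN.le, mul_eq_zero, or_iff_right hτ']

theorem stmt3 (N M D : ℕ) (hN : 2 ≤ N) (hM : 1 ≤ M) (hMN : M < N) (hD : 1 ≤ D) :
    ∀ τ ∈ Ioo (0:ℝ) 1, deriv (P N M D) τ = 0 ↔ H1 N M τ = H2 N D τ :=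
  stmt3_general N M D hM hMN hD
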